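/- arXiv:2101.01256 — 3 statements merged into one kernel-verified Lean document; each statement's English description precedes it below -/
import Mathlib

section
/- Conversely, if a vector σ = (σ_0, σ_1, …, σ_n) of non-negative integers has the property that every integer k with 0 ≤ k ≤ σ_0 + … + σ_n is a subset sum of the σ_i, and the entries are arranged in non-decreasing order, then σ_i ≤ σ_0 + σ_1 + … + σ_{i-1} + 1 for all 1 ≤ i ≤ n. -/
/-- if a sorted vector of non-negative integers realizes every
integer between 0 and its total sum as a subset sum, then it satisfies the
changemaker inequalities. -/
theorem subset_sums_changemaker (n : ℕ) (σ : Fin (n + 1) → ℤ)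
    (hnonneg : ∀ i, 0 ≤ σ i) (hsorted : Monotone σ)
    (hsubset : ∀ k : ℤ, 0 ≤ k → k ≤ ∑ i, σ i →
      ∃ S : Finset (Fin (n + 1)), ∑ i ∈ S, σ i = k) :
    ∀ i : Fin (n + 1), 1 ≤ (i : ℕ) →
      σ i ≤ (∑ j ∈ Finset.univ.filter (fun j => j < i), σ j) + 1 := by
  intro i _
  by_contra hlt
  push_neg at hlt
  set T := Finset.univ.filter (fun j => j < i) with hT
  set k : ℤ := (∑ j ∈ T, σ j) + 1 with hk
  have hTnn : 0 ≤ ∑ j ∈ T, σ j := Finset.sum_nonneg fun j _ => hnonneg j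
  have hk0 : 0 ≤ k := by linarith
  have hktot : k ≤ ∑ j, σ j := by
    have hsplit : ∑ j, σ j = (∑ j ∈ T, σ j) + ∑ j ∈ Tᶜ, σ j := by
      rw [← Finset.sum_add_sum_compl T]
    have hiT : i ∈ Tᶜ := by simp [hT]
    have : σ i ≤ ∑ j ∈ Tᶜ, σ j :=
      Finset.single_le_sum (fun j _ => hnonneg j) hiT
    linarith
  obtain ⟨S, hS⟩ := hsubset k hk0 hktot
  have hST : S ⊆ T := by
    intro j hj
    by_contra hjT
    have hij : i ≤ j := by
      simp only [hT, Finset.mem_filter, Finset.mem_univ, true_and] at hjT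
      exact le_of_not_gt hjT
    have hσj : k < σ j := lt_of_lt_of_le hlt (hsorted hij)
    have : σ j ≤ ∑ m ∈ S, σ m := Finset.single_le_sum (fun m _ => hnonneg m) hj
    linarith [hS]
  have : ∑ j ∈ S, σ j ≤ ∑ j ∈ T, σ j :=
    Finset.sum_le_sum_of_subset_of_nonneg hST (fun j _ _ => hnonneg j)
  omega
end

section
/- The E8 lattice does not embed isometrically into any diagonal lattice Z^n (equivalently, the negative definite E8 form −E8 does not embed into −Z^n for any n). -/
open Matrix

/-- The Gram matrix of the (positive definite) E8 lattice, the negative of the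
matrix displayed in the paper. -/
def E8matrix : Matrix (Fin 8) (Fin 8) ℤ :=
  !![2, -1, -1, 0, -1, 0, 0, 0;
     -1, 2, 0, 0, 0, 0, 0, 0;
     -1, 0, 2, -1, 0, 0, 0, 0;
     0, 0, -1, 2, 0, 0, 0, 0;
     -1, 0, 0, 0, 2, -1, 0, 0;
     0, 0, 0, 0, -1, 2, -1, 0;
     0, 0, 0, 0, 0, -1, 2, -1;
     0, 0, 0, 0, 0, 0, -1, 2]

/-- Integer inverse of the E8 Gram matrix (E8 is unimodular). -/
def E8inv : Matrix (Fin 8) (Fin 8) ℤ :=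
  !![30, 15, 20, 10, 24, 18, 12, 6;
     15, 8, 10, 5, 12, 9, 6, 3;
     20, 10, 14, 7, 16, 12, 8, 4;
     10, 5, 7, 4, 8, 6, 4, 2;
     24, 12, 16, 8, 20, 15, 10, 5;
     18, 9, 12, 6, 15, 12, 8, 4;
     12, 6, 8, 4, 10, 8, 6, 3;
     6, 3, 4, 2, 5, 4, 3, 2]

/-- "Half" of the E8 matrix: a matrix A with A + Aᵀ = E8matrix. -/
def E8half : Matrix (Fin 8) (Fin 8) ℤ :=
  !![1, -1, -1, 0, -1, 0, 0, 0;
     0, 1, 0, 0, 0, 0, 0, 0;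
     0, 0, 1, -1, 0, 0, 0, 0;
     0, 0, 0, 1, 0, 0, 0, 0;
     0, 0, 0, 0, 1, -1, 0, 0;
     0, 0, 0, 0, 0, 1, -1, 0;
     0, 0, 0, 0, 0, 0, 1, -1;
     0, 0, 0, 0, 0, 0, 0, 1]

lemma e8_mul_inv : E8matrix * E8inv = 1 := by decide

lemma e8_symm : E8matrixᵀ = E8matrix := by decide

lemma e8_half : E8half + E8halfᵀ = E8matrix := by decide

lemma e8_isUnit_det : IsUnit E8matrix.det :=
  Matrix.isUnit_det_of_right_inverse e8_mul_inv

lemma dotProduct_self_nonneg {m : ℕ} (v : Fin m → ℤ) : 0 ≤ v ⬝ᵥ v :=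
  Finset.sum_nonneg fun i _ => mul_self_nonneg (v i)

/-- The E8 quadratic form is even. -/
lemma e8_even (c : Fin 8 → ℤ) : Even (c ⬝ᵥ E8matrix.mulVec c) := by
  have hsym : c ⬝ᵥ E8halfᵀ.mulVec c = c ⬝ᵥ E8half.mulVec c := by
    rw [Matrix.dotProduct_mulVec, Matrix.vecMul_transpose, dotProduct_comm]
  have : c ⬝ᵥ E8matrix.mulVec c = 2 * (c ⬝ᵥ E8half.mulVec c) := by
    rw [← e8_half, Matrix.add_mulVec, dotProduct_add, hsym]; ring
  exact ⟨_, by rw [this]; ring⟩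

/-- the E8 lattice admits no isometric embedding into any diagonal
lattice ℤⁿ with the standard Euclidean form. -/
theorem e8_not_embed_diagonal (n : ℕ) :
    ¬ ∃ f : (Fin 8 → ℤ) →ₗ[ℤ] (Fin n → ℤ), Function.Injective f ∧
      ∀ v w : Fin 8 → ℤ, (f v) ⬝ᵥ (f w) = v ⬝ᵥ (E8matrix.mulVec w) := by
  rintro ⟨f, -, hf⟩
  set B : Matrix (Fin 8) (Fin n) ℤ := Matrix.of fun i => f (Pi.single i 1) with hBdef
  -- f is given by vecMul with B
  have hfB : ∀ v : Fin 8 → ℤ, f v = v ᵥ* B := by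
    intro v
    rw [LinearMap.pi_apply_eq_sum_univ f v]
    funext j
    simp only [Finset.sum_apply, Pi.smul_apply, smul_eq_mul, Matrix.vecMul,
      dotProduct]
    refine Finset.sum_congr rfl fun i _ => ?_
    have he : (fun k => if i = k then (1:ℤ) else 0) = Pi.single i 1 := by
      funext k; simp [Pi.single_apply, eq_comm]
    rw [he]
    rfl
  -- Gram matrix of B is E8
  have hM : B * Bᵀ = E8matrix := by
    ext i j
    have h := hf (Pi.single i 1) (Pi.single j 1)
    rw [hfB, hfB] at h
    simpa [Matrix.mul_apply, Matrix.single_vecMul, Matrix.mulVec_single,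
      dotProduct, Matrix.transpose_apply, Pi.single_apply, ite_mul,
      Finset.sum_ite_eq] using h
  have hinv1 : E8matrix⁻¹ * E8matrix = 1 := Matrix.nonsing_inv_mul _ e8_isUnit_det
  have hinv2 : E8matrix * E8matrix⁻¹ = 1 := Matrix.mul_nonsing_inv _ e8_isUnit_det
  set P : Matrix (Fin n) (Fin n) ℤ := Bᵀ * E8matrix⁻¹ * B with hPdef
  have hPP : P * P = P := by
    calc P * P = Bᵀ * E8matrix⁻¹ * ((B * Bᵀ) * (E8matrix⁻¹ * B)) := by
          simp only [hPdef, Matrix.mul_assoc]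
      _ = P := by rw [hM, ← Matrix.mul_assoc E8matrix, hinv2, Matrix.one_mul, hPdef,
          Matrix.mul_assoc]
  have hPt : Pᵀ = P := by
    rw [hPdef, Matrix.transpose_mul, Matrix.transpose_mul, Matrix.transpose_transpose,
      Matrix.transpose_nonsing_inv, e8_symm, Matrix.mul_assoc]
  have htr : P.trace = 8 := by
    have h1 : P.trace = ((E8matrix⁻¹ * B) * Bᵀ).trace := by
      rw [hPdef, Matrix.mul_assoc, Matrix.trace_mul_comm, Matrix.mul_assoc]
    rw [h1, Matrix.mul_assoc, hM, hinv1, Matrix.trace_one]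
    norm_num
  -- each diagonal entry of P is zero
  have hdiag : ∀ j, P j j = 0 := by
    intro j
    set c : Fin 8 → ℤ := (Pi.single j 1) ᵥ* (Bᵀ * E8matrix⁻¹) with hcdef
    have hfc : f c = (Pi.single j 1) ᵥ* P := by
      rw [hfB, hcdef, Matrix.vecMul_vecMul, hPdef]
    have hrow : (Pi.single j 1) ᵥ* P = fun k => P j k := by
      funext k
      simp [Matrix.single_vecMul]
    -- norm of the projection is P j j
    have h1 : (f c) ⬝ᵥ (f c) = P j j := by
      rw [hfc, hrow]
      have : (fun k => P j k) ⬝ᵥ (fun k => P j k) = (P * Pᵀ) j j := by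
        simp [Matrix.mul_apply, dotProduct, Matrix.transpose_apply]
      rw [this, hPt, hPP]
    have h2 : Even (P j j) := by
      rw [← h1, hf c c]; exact e8_even c
    have h4 : 0 ≤ P j j := h1 ▸ dotProduct_self_nonneg (f c)
    have h3 : P j j ≤ 1 := by
      have hd := dotProduct_self_nonneg (Pi.single j 1 - ((Pi.single j 1) ᵥ* P))
      have hexp : (Pi.single j 1 - ((Pi.single j 1) ᵥ* P)) ⬝ᵥ
          (Pi.single j 1 - ((Pi.single j 1) ᵥ* P)) = 1 - P j j := by
        rw [sub_dotProduct, dotProduct_sub, dotProduct_sub]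
        have ha : (Pi.single j (1:ℤ)) ⬝ᵥ (Pi.single j 1) = 1 := by
          simp [single_dotProduct, Pi.single_apply]
        have hb : (Pi.single j (1:ℤ)) ⬝ᵥ ((Pi.single j 1) ᵥ* P) = P j j := by
          rw [hrow]; simp [single_dotProduct]
        have hc2 : ((Pi.single j 1) ᵥ* P) ⬝ᵥ (Pi.single j (1:ℤ)) = P j j := by
          rw [hrow]; simp [dotProduct_single]
        have hd2 : ((Pi.single j 1) ᵥ* P) ⬝ᵥ ((Pi.single j 1) ᵥ* P) = P j j := by
          rw [← hfc, h1]
        rw [ha, hb, hc2, hd2]; ring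
      rw [hexp] at hd; omega
    obtain ⟨k, hk⟩ := h2
    omega
  have : P.trace = 0 := by
    rw [Matrix.trace]
    simp only [Matrix.diag]
    exact Finset.sum_eq_zero fun j _ => hdiag j
  omega
end

section
/- Let K be an L-space knot with symmetric Alexander polynomial Δ_K(T) = ∑_{j=−g}^{g} a_j T^j of degree g, and define torsion coefficients t_i(K) = ∑_{j≥1} j·a_{|i|+j}. If the coefficients a_j alternate in sign, are ±1, and a_g = 1 (the L-space knot condition on the Alexander polynomial), then t_i(K) ≥ 0 for all i, the sequence (t_i)_{i≥0} is non-increasing, and t_i(K) = 0 if and only if i ≥ g. -/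
/-!
Write `S i = ∑_{i < k ≤ g} a k` for the tail sums. Read downward from `a g = 1`, the nonzero
coefficients alternate `1, -1, 1, …`, so every tail sum is `0` or `1`. Since `a` vanishes above
`g`, `t i - t (i + 1) = S i` for `i ≥ 0`; hence `t` is non-increasing on `i ≥ 0` and vanishes
from `g` on, so it is non-negative, and `t (g - 1) = S (g - 1) = a g = 1` gives `t i ≥ 1` for
`0 ≤ i < g`.
-/

namespace LSpacePolynomial

open Finset

variable (a : ℤ → ℤ) (g : ℤ)

noncomputable def tailSum (i : ℤ) : ℤ := ∑ k ∈ Icc (i + 1) g, a k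

noncomputable def torsionSum (i : ℤ) : ℤ := ∑ j ∈ Icc 1 g, j * a (i + j)

variable {a g} (hsupp : ∀ j, g < j → a j = 0) (htop : a g = 1)
  (halt : ∀ j k : ℤ, j < k → a j ≠ 0 → a k ≠ 0 →
    (∀ m : ℤ, j < m → m < k → a m = 0) → a j * a k = -1)

lemma tailSum_of_le {i : ℤ} (h : g ≤ i) : tailSum a g i = 0 := by
  rw [tailSum, Icc_eq_empty (by omega), sum_empty]

lemma tailSum_sub_one : tailSum a g (g - 1) = a g := by
  rw [tailSum, sub_add_cancel, Icc_self, sum_singleton]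

lemma tailSum_eq_add_tailSum {i m : ℤ} (him : i < m) (hmg : m ≤ g)
    (hgap : ∀ k, i < k → k < m → a k = 0) : tailSum a g i = a m + tailSum a g m := by
  have hsplit : Icc (i + 1) g = Ico (i + 1) m ∪ insert m (Icc (m + 1) g) := by
    ext k; simp only [mem_union, mem_insert, mem_Icc, mem_Ico]; omega
  rw [tailSum, hsplit, sum_union (by rw [disjoint_left]; simp only [mem_Ico, mem_insert, mem_Icc]; omega),
    sum_eq_zero fun k hk => hgap k (mem_Ico.mp hk).1 (mem_Ico.mp hk).2,
    sum_insert (by simp), zero_add, tailSum]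

lemma exists_next_ne_zero {i : ℤ} (hi : i < g) (hg : a g ≠ 0) :
    ∃ m, i < m ∧ m ≤ g ∧ a m ≠ 0 ∧ ∀ k, i < k → k < m → a k = 0 := by
  obtain ⟨m, ⟨him, hm⟩, hleast⟩ :=
    Int.exists_least_of_bdd (P := fun m => i < m ∧ a m ≠ 0) ⟨i, fun _ h => h.1.le⟩ ⟨g, hi, hg⟩
  refine ⟨m, him, hleast g ⟨hi, hg⟩, hm, fun k hik hkm => ?_⟩
  by_contra hk
  exact absurd (hleast k ⟨hik, hk⟩) (not_le.mpr hkm)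

section Support

include hsupp

lemma sum_Icc_eq_sum_Icc_of_le {f : ℤ → ℤ} (hf : ∀ k, a k = 0 → f k = 0) {l n n' : ℤ}
    (hn : g ≤ n) (hn' : n ≤ n') : ∑ k ∈ Icc l n, f k = ∑ k ∈ Icc l n', f k :=
  sum_subset (Icc_subset_Icc le_rfl hn') fun k hk hk' => by
    simp only [mem_Icc, not_and, not_le] at hk hk'
    exact hf k (hsupp k (by omega))

lemma torsionSum_of_le {i : ℤ} (h : g ≤ i) : torsionSum a g i = 0 :=
  sum_eq_zero fun j hj => by rw [hsupp (i + j) (by rw [mem_Icc] at hj; omega), mul_zero]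

lemma torsionSum_eq_tailSum_add {i : ℤ} (hi : 0 ≤ i) :
    torsionSum a g i = tailSum a g i + torsionSum a g (i + 1) := by
  have hshift (i : ℤ) : torsionSum a g i = ∑ k ∈ Icc (i + 1) (i + g), (k - i) * a k := by
    rw [torsionSum, ← map_add_left_Icc, sum_map]
    exact sum_congr rfl fun j _ => by simp
  have hcur : torsionSum a g i = ∑ k ∈ Icc (i + 1) (i + 1 + g), (k - i) * a k := by
    rw [hshift, sum_Icc_eq_sum_Icc_of_le hsupp (n' := i + 1 + g) (fun k hk => by rw [hk, mul_zero])
      (by omega) (by omega)]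
  have hnext : torsionSum a g (i + 1) = ∑ k ∈ Icc (i + 1) (i + 1 + g), (k - (i + 1)) * a k := by
    rw [hshift]
    refine sum_subset (Icc_subset_Icc (by omega) le_rfl) fun k hk hk' => ?_
    simp only [mem_Icc, not_and, not_le] at hk hk'
    rw [show k = i + 1 by omega, sub_self, zero_mul]
  have htail : tailSum a g i = ∑ k ∈ Icc (i + 1) (i + 1 + g), a k :=
    sum_Icc_eq_sum_Icc_of_le hsupp (fun k hk => hk) le_rfl (by omega)
  rw [hcur, hnext, htail, ← sum_add_distrib]
  exact sum_congr rfl fun k _ => by ring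

end Support

section Alternating

include htop halt

lemma tailSum_cases_of_ne_zero {m : ℤ} (hmg : m ≤ g) (hm : a m ≠ 0) :
    a m = 1 ∧ tailSum a g m = 0 ∨ a m = -1 ∧ tailSum a g m = 1 := by
  suffices h : ∀ n ≤ g, ∀ m, n ≤ m → m ≤ g → a m ≠ 0 →
      a m = 1 ∧ tailSum a g m = 0 ∨ a m = -1 ∧ tailSum a g m = 1 from h m hmg m le_rfl hmg hm
  intro n hng
  induction n, hng using Int.leInductionDown with
  | base =>
    intro m hgm hmg _
    obtain rfl : m = g := le_antisymm hmg hgm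
    exact .inl ⟨htop, tailSum_of_le le_rfl⟩
  | pred n hng ih =>
    intro m hnm hmg hm
    rcases (show m = n - 1 ∨ n ≤ m by omega) with rfl | hnm
    · obtain ⟨m', hm', hm'g, ham', hgap⟩ :=
        exists_next_ne_zero (by omega : n - 1 < g) (htop ▸ one_ne_zero)
      have hprod := halt _ _ hm' hm ham' hgap
      rw [tailSum_eq_add_tailSum hm' hm'g hgap]
      rcases Int.eq_one_or_neg_one_of_mul_eq_neg_one' hprod with ⟨h1, h2⟩ | ⟨h1, h2⟩ <;>
        rcases ih m' (by omega) hm'g ham' with ⟨h3, h4⟩ | ⟨h3, h4⟩ <;> omega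
    · exact ih m hnm hmg hm

lemma tailSum_nonneg (i : ℤ) : 0 ≤ tailSum a g i := by
  rcases le_or_gt g i with hgi | hig
  · exact (tailSum_of_le hgi).ge
  obtain ⟨m, him, hmg, hm, hgap⟩ := exists_next_ne_zero hig (htop ▸ one_ne_zero)
  rw [tailSum_eq_add_tailSum him hmg hgap]
  rcases tailSum_cases_of_ne_zero htop halt hmg hm with ⟨h1, h2⟩ | ⟨h1, h2⟩ <;> omega

end Alternating

section Torsion

include hsupp htop halt

lemma torsionSum_antitoneOn : AntitoneOn (torsionSum a g) (Set.Ici 0) :=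
  antitoneOn_of_add_one_le Set.ordConnected_Ici fun i _ hi _ => by
    rw [torsionSum_eq_tailSum_add hsupp hi]
    linarith [tailSum_nonneg htop halt i]

lemma torsionSum_nonneg {i : ℤ} (hi : 0 ≤ i) : 0 ≤ torsionSum a g i :=
  calc 0 = torsionSum a g (max i g) := (torsionSum_of_le hsupp (le_max_right i g)).symm
    _ ≤ torsionSum a g i :=
      torsionSum_antitoneOn hsupp htop halt hi (le_max_of_le_left hi) (le_max_left i g)

lemma torsionSum_eq_zero_iff {i : ℤ} (hi : 0 ≤ i) : torsionSum a g i = 0 ↔ g ≤ i := by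
  refine ⟨fun hzero => ?_, torsionSum_of_le hsupp⟩
  by_contra! hig
  have hlast : torsionSum a g (g - 1) = 1 := by
    rw [torsionSum_eq_tailSum_add hsupp (by omega), tailSum_sub_one, htop, sub_add_cancel,
      torsionSum_of_le hsupp le_rfl, add_zero]
  have := torsionSum_antitoneOn hsupp htop halt hi (by simp only [Set.mem_Ici]; omega)
    (by omega : i ≤ g - 1)
  omega

end Torsion

end LSpacePolynomial

open LSpacePolynomial

theorem torsion_coefficients_of_lspace_polynomial_general (g : ℤ)
    (a : ℤ → ℤ)
    (hsupp : ∀ j : ℤ, g < |j| → a j = 0)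
    (htop : a g = 1)
    (halt : ∀ j k : ℤ, j < k → a j ≠ 0 → a k ≠ 0 →
      (∀ m : ℤ, j < m → m < k → a m = 0) → a j * a k = -1)
    (t : ℤ → ℤ)
    (ht : ∀ i : ℤ, t i = ∑ j ∈ Finset.Icc (1 : ℤ) g, j * a (|i| + j)) :
    (∀ i : ℤ, 0 ≤ t i) ∧
    (∀ i : ℤ, 0 ≤ i → t (i + 1) ≤ t i) ∧
    (∀ i : ℤ, 0 ≤ i → (t i = 0 ↔ g ≤ i)) := by
  have hvanish : ∀ j, g < j → a j = 0 := fun j hj => hsupp j (hj.trans_le (le_abs_self j))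
  have ht' : ∀ i, 0 ≤ i → t i = torsionSum a g i := fun i hi => by
    rw [ht, abs_of_nonneg hi, torsionSum]
  refine ⟨fun i => ?_, fun i hi => ?_, fun i hi => ?_⟩
  · exact ht i ▸ torsionSum_nonneg hvanish htop halt (abs_nonneg i)
  · rw [ht' i hi, ht' (i + 1) (by omega)]
    exact torsionSum_antitoneOn hvanish htop halt hi (by simp only [Set.mem_Ici]; omega)
      (by omega)
  · rw [ht' i hi]
    exact torsionSum_eq_zero_iff hvanish htop halt hi

/-- for a symmetric Laurent polynomial of degree `g` with top
coefficient 1 whose nonzero coefficients are ±1 and alternate in sign (the form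
of the Alexander polynomial of an L-space knot), the torsion coefficients
`t_i = ∑_{j ≥ 1} j · a_{|i|+j}` are non-negative, non-increasing in `i ≥ 0`,
and vanish exactly for `i ≥ g`. -/
theorem torsion_coefficients_of_lspace_polynomial (g : ℤ) (hg : 0 < g)
    (a : ℤ → ℤ)
    (hsupp : ∀ j : ℤ, g < |j| → a j = 0)
    (hsym : ∀ j : ℤ, a (-j) = a j)
    (htop : a g = 1)
    (hpm : ∀ j : ℤ, a j = -1 ∨ a j = 0 ∨ a j = 1)
    (halt : ∀ j k : ℤ, j < k → a j ≠ 0 → a k ≠ 0 →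
      (∀ m : ℤ, j < m → m < k → a m = 0) → a j * a k = -1)
    (t : ℤ → ℤ)
    (ht : ∀ i : ℤ, t i = ∑ j ∈ Finset.Icc (1 : ℤ) g, j * a (|i| + j)) :
    (∀ i : ℤ, 0 ≤ t i) ∧
    (∀ i : ℤ, 0 ≤ i → t (i + 1) ≤ t i) ∧
    (∀ i : ℤ, 0 ≤ i → (t i = 0 ↔ g ≤ i)) :=
  torsion_coefficients_of_lspace_polynomial_general g a hsupp htop halt t ht
end
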